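/- Let R be a discrete valuation domain with prime element p, let G be a torsion R-module, let β be an ordinal, and let g ∈ p^βG[p] (i.e., g ∈ p^βG and pg = 0). Then there exists an R-module homomorphism f: P_β → G with f(β) = g, where β denotes the length-one generator of the Walker module P_β. -/

import Mathlib

universe u v w

open Ordinal

noncomputable def pPow (R : Type u) [CommRing R] (p : R) (G : Type v) [AddCommGroup G]
    [Module R G] (σ : Ordinal.{w}) : Submodule R G :=
  Ordinal.limitRecOn σ ⊤ (fun _ N => N.map (LinearMap.lsmul R G p))
    (fun o _ ih => ⨅ ρ : Set.Iio o, ih ρ.1 ρ.2)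

/-- Generators of the Walker module `P β`: strictly decreasing finite sequences of ordinals
starting with `β` (encoded by their tails). -/
def WalkerGen (β : Ordinal.{w}) : Type (w + 1) :=
  {l : List Ordinal.{w} // (β :: l).Chain' (· > ·)}

/-- The defining relation of the Walker module attached to a generator `g`:
`p • g - g'` where `g'` is obtained by deleting the last entry of `g`
(interpreted as `0` when `g` is the length-one sequence `β`). -/
noncomputable def walkerRel (R : Type u) [CommRing R] (p : R) (β : Ordinal.{w})
    (g : WalkerGen β) : WalkerGen β →₀ R :=
  p • Finsupp.single g 1 -
    if _h : g.1 = [] then 0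
    else Finsupp.single
      ⟨g.1.dropLast, g.2.sublist ((g.1.dropLast_sublist).cons₂ β)⟩ 1

/-- The Walker module `P β` over a discrete valuation domain with prime `p`. -/
noncomputable abbrev WalkerModule (R : Type u) [CommRing R] (p : R) (β : Ordinal.{w}) :=
  (WalkerGen β →₀ R) ⧸ Submodule.span R (Set.range (walkerRel R p β))

/-- The image in `P β` of a generator. -/
noncomputable def walkerMk (R : Type u) [CommRing R] (p : R) (β : Ordinal.{w})
    (g : WalkerGen β) : WalkerModule R p β :=
  Submodule.Quotient.mk (Finsupp.single g 1)

/-- The distinguished generator `β` of the Walker module `P β`. -/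
noncomputable def walkerTop (R : Type u) [CommRing R] (p : R) (β : Ordinal.{w}) :
    WalkerModule R p β :=
  walkerMk R p β ⟨[], List.isChain_singleton β⟩

/-!
Send the generator `β β₁ ⋯ βₙ` of `P_β` to `xₙ`, where `x₀ = g` and `xᵢ ∈ p^{βᵢ}G` is a chosen
solution of `p xᵢ = xᵢ₋₁`. Such a solution exists because `xᵢ₋₁ ∈ p^{βᵢ₋₁}G ⊆ p^{βᵢ+1}G = p·p^{βᵢ}G`
as `βᵢ < βᵢ₋₁` (with `β₀ = β`). The relation `p·(β β₁ ⋯ βₙ₊₁) = β β₁ ⋯ βₙ` then holds by construction, and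
`p·β = 0` because `p g = 0`.
-/

section pPow

variable (R : Type u) [CommRing R] (p : R) (G : Type v) [AddCommGroup G] [Module R G]

theorem pPow_succ (σ : Ordinal.{w}) :
    pPow R p G (σ + 1) = (pPow R p G σ).map (LinearMap.lsmul R G p) :=
  Ordinal.limitRecOn_add_one _ _ _ _

theorem pPow_limit {σ : Ordinal.{w}} (h : Order.IsSuccLimit σ) :
    pPow R p G σ = ⨅ ρ : Set.Iio σ, pPow R p G ρ.1 := by
  rw [pPow, Ordinal.limitRecOn_limit _ _ _ _ h]
  rfl

theorem pPow_succ_le (σ : Ordinal.{w}) : pPow R p G (σ + 1) ≤ pPow R p G σ := by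
  rw [pPow_succ]
  rintro _ ⟨y, hy, rfl⟩
  exact Submodule.smul_mem _ p hy

theorem pPow_antitone : Antitone (pPow.{u, v, w} R p G) := by
  intro ρ σ h
  induction σ using Ordinal.limitRecOn with
  | zero => rw [nonpos_iff_eq_zero.mp h]
  | add_one σ ih =>
    rcases Order.le_succ_iff_eq_or_le.mp h with rfl | h
    · rfl
    · exact (pPow_succ_le R p G σ).trans (ih h)
  | limit σ hσ ih =>
    rcases h.eq_or_lt with rfl | h
    · rfl
    · rw [pPow_limit R p G hσ]
      exact iInf_le (fun ρ : Set.Iio σ => pPow R p G ρ.1) ⟨ρ, h⟩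

variable {R p G}

theorem exists_mem_pPow_smul_eq {ρ σ : Ordinal.{w}} (h : ρ < σ) {x : G}
    (hx : x ∈ pPow R p G σ) : ∃ y ∈ pPow R p G ρ, p • y = x := by
  have hx' := pPow_antitone R p G (Order.add_one_le_of_lt h) hx
  rwa [pPow_succ] at hx'

variable (R p) in
open Classical in
noncomputable def pPowDiv (ρ : Ordinal.{w}) (x : G) : G :=
  if h : ∃ y ∈ pPow R p G ρ, p • y = x then h.choose else 0

theorem pPowDiv_spec {ρ σ : Ordinal.{w}} (h : ρ < σ) {x : G} (hx : x ∈ pPow R p G σ) :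
    pPowDiv R p ρ x ∈ pPow R p G ρ ∧ p • pPowDiv R p ρ x = x := by
  have hex := exists_mem_pPow_smul_eq h hx
  rw [pPowDiv, dif_pos hex]
  exact hex.choose_spec

end pPow

section WalkerLift

variable {R : Type u} [CommRing R] {p : R} {G : Type v} [AddCommGroup G] [Module R G]

variable (R p) in
noncomputable def pPowDivChain (x : G) (l : List Ordinal.{w}) : G :=
  l.foldl (fun y ρ => pPowDiv R p ρ y) x

theorem smul_pPowDiv_pPowDivChain {σ ρ : Ordinal.{w}} {x : G} (hx : x ∈ pPow R p G σ)
    {l : List Ordinal.{w}} (hl : (σ :: (l ++ [ρ])).IsChain (· > ·)) :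
    p • pPowDiv R p ρ (pPowDivChain R p x l) = pPowDivChain R p x l := by
  induction l generalizing σ x with
  | nil => exact (pPowDiv_spec ((List.isChain_pair (R := (· > ·))).mp hl) hx).2
  | cons a l ih =>
    obtain ⟨haσ, hl⟩ := List.isChain_cons_cons.mp hl
    exact ih (pPowDiv_spec haσ hx).1 hl

variable {β : Ordinal.{w}} {g : G}

theorem walkerRel_mem_ker (hg : g ∈ pPow R p G β) (hpg : p • g = 0) (s : WalkerGen β) :
    walkerRel R p β s ∈ LinearMap.ker
      (Finsupp.linearCombination R fun t : WalkerGen β => pPowDivChain R p g t.1) := by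
  rw [LinearMap.mem_ker]
  unfold walkerRel
  split_ifs with hnil
  · simpa [pPowDivChain, hnil] using hpg
  · rw [map_sub, map_smul, Finsupp.linearCombination_single, one_smul, sub_eq_zero]
    -- the shortened generator is elaborated at the subtype, not at `WalkerGen β`
    erw [Finsupp.linearCombination_single, one_smul]
    change p • pPowDivChain R p g s.1 = pPowDivChain R p g s.1.dropLast
    obtain ⟨l, ρ, hs⟩ := (List.eq_nil_or_concat' s.1).resolve_left hnil
    have hchain := s.2
    rw [hs] at hchain ⊢
    rw [List.dropLast_concat, pPowDivChain, List.foldl_concat]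
    exact smul_pPowDiv_pPowDivChain hg hchain

variable (R p β) in
noncomputable def walkerLift (hg : g ∈ pPow R p G β) (hpg : p • g = 0) :
    WalkerModule R p β →ₗ[R] G :=
  (Submodule.span R (Set.range (walkerRel R p β))).liftQ _ <|
    Submodule.span_le.mpr <| Set.range_subset_iff.mpr (walkerRel_mem_ker hg hpg)

theorem walkerLift_walkerTop (hg : g ∈ pPow R p G β) (hpg : p • g = 0) :
    walkerLift R p β hg hpg (walkerTop R p β) = g := by
  simp only [walkerLift, walkerTop, walkerMk, Submodule.liftQ_apply]
  erw [Finsupp.linearCombination_single, one_smul]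
  rfl

end WalkerLift

theorem stmt5_general (R : Type u) [CommRing R]
    (p : R)
    (G : Type v) [AddCommGroup G] [Module R G]
    (β : Ordinal.{w}) (g : G) (hg1 : g ∈ pPow R p G β) (hg2 : p • g = 0) :
    ∃ f : WalkerModule R p β →ₗ[R] G, f (walkerTop R p β) = g :=
  ⟨walkerLift R p β hg1 hg2, walkerLift_walkerTop hg1 hg2⟩

theorem stmt5 (R : Type u) [CommRing R] [IsDomain R] [IsDiscreteValuationRing R]
    (p : R) (hp : Irreducible p)
    (G : Type v) [AddCommGroup G] [Module R G] (hG : Module.IsTorsion R G)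
    (β : Ordinal.{w}) (g : G) (hg1 : g ∈ pPow R p G β) (hg2 : p • g = 0) :
    ∃ f : WalkerModule R p β →ₗ[R] G, f (walkerTop R p β) = g :=
  stmt5_general R p G β g hg1 hg2
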